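/- Safety-liveness decomposition: for every property Φ : Σ^ω → D, the property Ψ defined by Ψ(f) = ⊤ if Φ*(f) = Φ(f) and Ψ(f) = Φ(f) otherwise, is live, and Φ(f) = Φ*(f) ⊓ Ψ(f) for all f ∈ Σ^ω. -/
import Mathlib


open Classical

variable {A : Type*}

/-- Concatenation of a finite word with an infinite word. -/
noncomputable def ext (s : List A) (g : ℕ → A) : ℕ → A :=
  fun n => if h : n < s.length then s.get ⟨n, h⟩ else g (n - s.length)

/-- The length-`n` prefix of an infinite word. -/
noncomputable def pref (f : ℕ → A) (n : ℕ) : List A := List.ofFn (fun i : Fin n => f i)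

/-- The safety closure of a property. -/
noncomputable def sclo {D : Type*} [CompleteLattice D] (Φ : (ℕ → A) → D) : (ℕ → A) → D :=
  fun f => ⨅ n : ℕ, ⨆ g : ℕ → A, Φ (ext (pref f n) g)

/-- A quantitative property is safe. -/
def Safe {D : Type*} [CompleteLattice D] (Φ : (ℕ → A) → D) : Prop :=
  ∀ f : ℕ → A, ∀ v : D, ¬ v ≤ Φ f → ∃ n : ℕ, ¬ v ≤ ⨆ g : ℕ → A, Φ (ext (pref f n) g)

/-- A quantitative property is live. -/
def Live {D : Type*} [CompleteLattice D] (Φ : (ℕ → A) → D) : Prop :=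
  ∀ f : ℕ → A, Φ f < ⊤ → ∃ v : D, ¬ v ≤ Φ f ∧ ∀ n : ℕ, v ≤ ⨆ g : ℕ → A, Φ (ext (pref f n) g)


lemma ext_pref_eq (f : ℕ → A) (n : ℕ) : ext (pref f n) (fun k => f (n + k)) = f := by
  funext m
  simp only [ext, pref, List.length_ofFn]
  split
  · simp [List.get_ofFn]
  · congr 1; omega

lemma le_sclo {D : Type*} [CompleteLattice D] (Φ : (ℕ → A) → D) (f : ℕ → A) :
    Φ f ≤ sclo Φ f := by
  refine le_iInf fun n => ?_
  have := le_iSup (fun g => Φ (ext (pref f n) g)) (fun k => f (n + k))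
  rwa [ext_pref_eq] at this

theorem safety_liveness_decomposition {D : Type*} [CompleteLattice D] [Fintype A] [Nonempty A]
    (Φ : (ℕ → A) → D) :
    Live (fun f : ℕ → A => if sclo Φ f = Φ f then (⊤ : D) else Φ f) ∧
      ∀ f : ℕ → A,
        Φ f = sclo Φ f ⊓ (if sclo Φ f = Φ f then (⊤ : D) else Φ f) := by
  constructor
  · intro f hf
    simp only at hf ⊢
    by_cases h : sclo Φ f = Φ f
    · simp [h] at hf
    · refine ⟨sclo Φ f, fun hle => h (le_antisymm (by simpa [h] using hle) (le_sclo Φ f)), fun n => ?_⟩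
      calc sclo Φ f ≤ ⨆ g : ℕ → A, Φ (ext (pref f n) g) := iInf_le _ n
        _ ≤ ⨆ g : ℕ → A, (if sclo Φ (ext (pref f n) g) = Φ (ext (pref f n) g) then (⊤ : D)
              else Φ (ext (pref f n) g)) := by
            refine iSup_mono fun g => ?_
            split
            · exact le_top
            · exact le_rfl
  · intro f
    by_cases h : sclo Φ f = Φ f
    · simp [h]
    · simp only [h, if_neg]
      exact (inf_eq_right.mpr (le_sclo Φ f)).symm
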